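/- Let n = 2 and h^1, h^2 : ℝ^m → A be smooth maps into an associative unital algebra satisfying h^a h^b + h^b h^a = 2η^{ab}·1 pointwise (η = diag(±1), signature (p,q), p+q=2). With h_a := η_{ab}h^b and h^{12} := h^1 h^2, h_{12} := h_2 h_1, set C_μ := (1/4)(∂_μ h^1 h_1 + ∂_μ h^2 h_2 + ∂_μ h^{12} h_{12}). Then ∂_μ h^a − [C_μ, h^a] = 0 for a = 1, 2. -/

import Mathlib

/-- Partial derivative in the μ-th coordinate direction. -/
noncomputable def pdv {m : ℕ} {A : Type*} [NormedAddCommGroup A] [NormedSpace ℝ A]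
    (μ : Fin m) (f : (Fin m → ℝ) → A) (x : Fin m → ℝ) : A :=
  fderiv ℝ f x (Pi.single μ 1)

lemma pdv_mul {m : ℕ} {A : Type*} [NormedRing A] [NormedAlgebra ℝ A]
    (μ : Fin m) {f g : (Fin m → ℝ) → A} {x : Fin m → ℝ}
    (hf : DifferentiableAt ℝ f x) (hg : DifferentiableAt ℝ g x) :
    pdv μ (fun y => f y * g y) x = pdv μ f x * g x + f x * pdv μ g x := by
  unfold pdv
  rw [fderiv_fun_mul' hf hg]
  simp only [ContinuousLinearMap.add_apply, ContinuousLinearMap.smul_apply,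
    ContinuousLinearMap.smulRight_apply, smul_eq_mul]
  exact add_comm _ _

lemma pdv_const {m : ℕ} {A : Type*} [NormedAddCommGroup A] [NormedSpace ℝ A]
    (μ : Fin m) (c : A) (x : Fin m → ℝ) : pdv μ (fun _ => c) x = 0 := by
  unfold pdv
  rw [fderiv_fun_const]
  simp

lemma pdv_add {m : ℕ} {A : Type*} [NormedAddCommGroup A] [NormedSpace ℝ A]
    (μ : Fin m) {f g : (Fin m → ℝ) → A} {x : Fin m → ℝ}
    (hf : DifferentiableAt ℝ f x) (hg : DifferentiableAt ℝ g x) :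
    pdv μ (fun y => f y + g y) x = pdv μ f x + pdv μ g x := by
  unfold pdv
  rw [fderiv_fun_add hf hg]
  simp

lemma key1 {A : Type*} [Ring A] [Algebra ℝ A] (α β : ℝ) (hα : α*α=1) (hβ : β*β=1)
    (a b p q : A) (ha : a*a = α•(1:A)) (hb : b*b = β•(1:A)) (hab : a*b = -(b*a))
    (hap : a*p = -(p*a)) (hbq : b*q = -(q*b)) (hbp : b*p = -(p*b) - (a*q) - (q*a)) :
    (α•(p*a) + β•(q*b) + (α*β)•((p*b + a*q)*(b*a)))*a
      - a*(α•(p*a) + β•(q*b) + (α*β)•((p*b + a*q)*(b*a))) = (4:ℝ)•p := by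
  have ha' : ∀ z : A, a*(a*z) = α•z := fun z => by rw [← mul_assoc, ha, smul_mul_assoc, one_mul]
  have hb' : ∀ z : A, b*(b*z) = β•z := fun z => by rw [← mul_assoc, hb, smul_mul_assoc, one_mul]
  have hab' : ∀ z : A, a*(b*z) = -(b*(a*z)) := fun z => by
    rw [← mul_assoc, hab, neg_mul, mul_assoc]
  have hap' : ∀ z : A, a*(p*z) = -(p*(a*z)) := fun z => by
    rw [← mul_assoc, hap, neg_mul, mul_assoc]
  have hbq' : ∀ z : A, b*(q*z) = -(q*(b*z)) := fun z => by
    rw [← mul_assoc, hbq, neg_mul, mul_assoc]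
  have hbp' : ∀ z : A, b*(p*z) = -(p*(b*z)) - (a*(q*z)) - (q*(a*z)) := fun z => by
    rw [← mul_assoc, hbp, sub_mul, sub_mul, neg_mul, mul_assoc, mul_assoc, mul_assoc]
  simp only [mul_add, add_mul, smul_mul_assoc, mul_smul_comm, mul_assoc, smul_add,
    ha', hb', hab', hap', hbq', hbp', ha, hb, hab, hap, hbq, hbp, smul_smul,
    mul_neg, neg_mul, smul_neg, neg_neg, mul_one, one_smul, sub_mul, mul_sub, smul_sub]
  ring_nf
  simp only [pow_two, hα, hβ, one_mul, mul_one, one_smul]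
  module

lemma key2 {A : Type*} [Ring A] [Algebra ℝ A] (α β : ℝ) (hα : α*α=1) (hβ : β*β=1)
    (a b p q : A) (ha : a*a = α•(1:A)) (hb : b*b = β•(1:A)) (hab : a*b = -(b*a))
    (hap : a*p = -(p*a)) (hbq : b*q = -(q*b)) (hbp : b*p = -(p*b) - (a*q) - (q*a)) :
    (α•(p*a) + β•(q*b) + (α*β)•((p*b + a*q)*(b*a)))*b
      - b*(α•(p*a) + β•(q*b) + (α*β)•((p*b + a*q)*(b*a))) = (4:ℝ)•q := by
  have ha' : ∀ z : A, a*(a*z) = α•z := fun z => by rw [← mul_assoc, ha, smul_mul_assoc, one_mul]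
  have hb' : ∀ z : A, b*(b*z) = β•z := fun z => by rw [← mul_assoc, hb, smul_mul_assoc, one_mul]
  have hab' : ∀ z : A, a*(b*z) = -(b*(a*z)) := fun z => by
    rw [← mul_assoc, hab, neg_mul, mul_assoc]
  have hap' : ∀ z : A, a*(p*z) = -(p*(a*z)) := fun z => by
    rw [← mul_assoc, hap, neg_mul, mul_assoc]
  have hbq' : ∀ z : A, b*(q*z) = -(q*(b*z)) := fun z => by
    rw [← mul_assoc, hbq, neg_mul, mul_assoc]
  have hbp' : ∀ z : A, b*(p*z) = -(p*(b*z)) - (a*(q*z)) - (q*(a*z)) := fun z => by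
    rw [← mul_assoc, hbp, sub_mul, sub_mul, neg_mul, mul_assoc, mul_assoc, mul_assoc]
  have hba : b*a = -(a*b) := by rw [hab, neg_neg]
  have hspec : ∀ z : A, b*(a*(q*z)) = a*(q*(b*z)) := fun z => by
    rw [← mul_assoc b a, hba]
    simp only [neg_mul, mul_assoc, hbq', mul_neg, neg_neg]
  simp only [hspec, mul_add, add_mul, smul_mul_assoc, mul_smul_comm, mul_assoc, smul_add,
    ha', hb', hab', hap', hbq', hbp', ha, hb, hab, hap, hbq, hbp, smul_smul,
    mul_neg, neg_mul, smul_neg, neg_neg, mul_one, one_smul, sub_mul, mul_sub, smul_sub]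
  ring_nf
  simp only [pow_two, hα, hβ, one_mul, mul_one, one_smul]
  module

/-- for n = 2, C_μ = (1/4)(∂_μ h¹ h_1 + ∂_μ h² h_2 + ∂_μ h¹² h_12)
solves ∂_μ h^a − [C_μ, h^a] = 0 for a = 1, 2. -/
theorem spin_connection_n_two {m : ℕ} {A : Type*}
    [NormedRing A] [NormedAlgebra ℝ A]
    (η1 η2 : ℝ) (hη1 : η1 = 1 ∨ η1 = -1) (hη2 : η2 = 1 ∨ η2 = -1)
    (h1 h2 : (Fin m → ℝ) → A) (hh1 : ContDiff ℝ (⊤ : ℕ∞) h1) (hh2 : ContDiff ℝ (⊤ : ℕ∞) h2)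
    (hr11 : ∀ x, h1 x * h1 x = η1 • (1 : A))
    (hr22 : ∀ x, h2 x * h2 x = η2 • (1 : A))
    (hr12 : ∀ x, h1 x * h2 x = -(h2 x * h1 x))
    (C : Fin m → (Fin m → ℝ) → A)
    (hC : ∀ μ, C μ = fun x => (1 / 4 : ℝ) •
        (pdv μ h1 x * (η1 • h1 x) + pdv μ h2 x * (η2 • h2 x)
          + pdv μ (fun y => h1 y * h2 y) x * ((η1 * η2) • (h2 x * h1 x))))
    (μ : Fin m) (x : Fin m → ℝ) :
    pdv μ h1 x - (C μ x * h1 x - h1 x * C μ x) = 0 ∧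
    pdv μ h2 x - (C μ x * h2 x - h2 x * C μ x) = 0 := by
  have hα : η1 * η1 = 1 := by rcases hη1 with h | h <;> rw [h] <;> norm_num
  have hβ : η2 * η2 = 1 := by rcases hη2 with h | h <;> rw [h] <;> norm_num
  have d1 : DifferentiableAt ℝ h1 x := (hh1.differentiable (by simp)).differentiableAt
  have d2 : DifferentiableAt ℝ h2 x := (hh2.differentiable (by simp)).differentiableAt
  set a := h1 x with ha_def
  set b := h2 x with hb_def
  set p := pdv μ h1 x with hp_def
  set q := pdv μ h2 x with hq_def
  -- product rule for h1*h2
  have hpdv12 : pdv μ (fun y => h1 y * h2 y) x = p * b + a * q := pdv_mul μ d1 d2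
  -- derivative of h1*h1 = const
  have hap : a * p = -(p * a) := by
    have e0 : pdv μ (fun y => h1 y * h1 y) x = 0 := by
      rw [show (fun y => h1 y * h1 y) = fun _ => η1 • (1 : A) from funext hr11, pdv_const]
    rw [pdv_mul μ d1 d1] at e0
    exact eq_neg_of_add_eq_zero_right e0
  have hbq : b * q = -(q * b) := by
    have e0 : pdv μ (fun y => h2 y * h2 y) x = 0 := by
      rw [show (fun y => h2 y * h2 y) = fun _ => η2 • (1 : A) from funext hr22, pdv_const]
    rw [pdv_mul μ d2 d2] at e0
    exact eq_neg_of_add_eq_zero_right e0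
  have hbp : b * p = -(p * b) - a * q - q * a := by
    have e0 : pdv μ (fun y => h1 y * h2 y + h2 y * h1 y) x = 0 := by
      rw [show (fun y => h1 y * h2 y + h2 y * h1 y) = fun _ => (0 : A) from
        funext fun y => by rw [hr12 y]; abel, pdv_const]
    rw [pdv_add μ (f := fun y => h1 y * h2 y) (g := fun y => h2 y * h1 y) (d1.mul d2) (d2.mul d1), pdv_mul μ d1 d2, pdv_mul μ d2 d1] at e0
    have e' : (p * b + a * q + q * a) + b * p = 0 := by rw [← e0]; abel
    rw [eq_neg_of_add_eq_zero_right e']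
    abel
  constructor
  · rw [hC]
    simp only [hpdv12, ← ha_def, ← hb_def, ← hp_def, ← hq_def, mul_smul_comm]
    rw [smul_mul_assoc, ← smul_sub,
      key1 η1 η2 hα hβ a b p q (hr11 x) (hr22 x) (hr12 x) hap hbq hbp]
    module
  · rw [hC]
    simp only [hpdv12, ← ha_def, ← hb_def, ← hp_def, ← hq_def, mul_smul_comm]
    rw [smul_mul_assoc, ← smul_sub,
      key2 η1 η2 hα hβ a b p q (hr11 x) (hr22 x) (hr12 x) hap hbq hbp]
    module
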